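/- Let ℓ : ℝ^d → ℝ be convex and G-Lipschitz and let r > 0. Then the r-smoothing ℓ̂ is differentiable on ℝ^d and its gradient is (G√d/r)-Lipschitz: ‖∇ℓ̂(u) − ∇ℓ̂(v)‖ ≤ (G√d/r)·‖u − v‖ for all u, v ∈ ℝ^d. -/

import Mathlib

open MeasureTheory

/-- The uniform probability measure on the closed Euclidean ball of radius `r`
centered at the origin in `ℝ^d`. -/
noncomputable def uniformBall (d : ℕ) (r : ℝ) : Measure (EuclideanSpace ℝ (Fin d)) :=
  (volume (Metric.closedBall (0 : EuclideanSpace ℝ (Fin d)) r))⁻¹ •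
    volume.restrict (Metric.closedBall (0 : EuclideanSpace ℝ (Fin d)) r)

/-- The `r`-smoothing of `ℓ`: the average of `ℓ` over the ball of radius `r` around the point. -/
noncomputable def smoothed {d : ℕ} (ℓ : EuclideanSpace ℝ (Fin d) → ℝ) (r : ℝ)
    (θ : EuclideanSpace ℝ (Fin d)) : ℝ :=
  ∫ y, ℓ (θ + y) ∂(uniformBall d r)

open Metric Real Filter Topology
open scoped RealInnerProductSpace

/-!
Let `g θ = ⨍_{B(θ,r)} ∇ℓ` be the ball average of the Rademacher gradient of `ℓ`, which is bounded
by `G`. Averaging the subgradient inequality of the convex function `ℓ` gives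
`⟪g θ, h⟫ ≤ ℓ̂ (θ + h) - ℓ̂ θ ≤ ⟪g (θ + h), h⟫`, so `ℓ̂` is differentiable with gradient `g` as soon
as `g` is continuous. Two averages `g u` and `g v` differ only through the lenses
`B(u,r) \ B(v,r)` and `B(v,r) \ B(u,r)`; slicing along `u - v` shows that each lens has volume at
most `‖u - v‖ · vol_{d-1}(B_r)`, and the log-convexity of `Γ` gives
`2 r · vol_{d-1}(B_r) ≤ √d · vol_d(B_r)`. Hence `‖g u - g v‖ ≤ (G √d / r) ‖u - v‖`.
-/

theorem Real.Gamma_add_half_le_sqrt_mul_Gamma {s : ℝ} (hs : 0 < s) :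
    Gamma (s + 1 / 2) ≤ √s * Gamma s := by
  have h := Gamma_mul_add_mul_le_rpow_Gamma_mul_rpow_Gamma hs (by linarith : 0 < s + 1)
    (by norm_num : (0 : ℝ) < 1 / 2) (by norm_num : (0 : ℝ) < 1 / 2) (by norm_num)
  have hΓ := (Gamma_pos_of_pos hs).le
  rwa [Gamma_add_one hs.ne', ← mul_rpow hΓ (by positivity), ← sqrt_eq_rpow,
    show Gamma s * (s * Gamma s) = s * Gamma s ^ 2 by ring, sqrt_mul hs.le, sqrt_sq hΓ,
    show 1 / 2 * s + 1 / 2 * (s + 1) = s + 1 / 2 by ring] at h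

theorem Real.two_mul_Gamma_add_half_le (n : ℕ) :
    2 * Gamma ((n + 1 : ℕ) / 2 + 1) ≤ √(n + 1) * √π * Gamma (n / 2 + 1) := by
  rw [show ((n + 1 : ℕ) : ℝ) / 2 + 1 = (n / 2 + 1) + 1 / 2 by push_cast; ring]
  rcases Nat.eq_zero_or_pos n with rfl | hn
  · norm_num
    rw [show (3 / 2 : ℝ) = 1 / 2 + 1 by norm_num, Gamma_add_one (by norm_num), Gamma_one_half_eq]
    linarith
  have hΓ := Gamma_add_half_le_sqrt_mul_Gamma (by positivity : (0 : ℝ) < n / 2 + 1)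
  have hsqrt : 2 * √(n / 2 + 1 : ℝ) ≤ √(n + 1) * √π := by
    have hn₁ : (1 : ℝ) ≤ n := by exact_mod_cast hn
    rw [← sqrt_mul (by positivity), show (2 : ℝ) = √4 by norm_num, ← sqrt_mul (by norm_num)]
    exact sqrt_le_sqrt (by nlinarith [pi_gt_three])
  calc 2 * Gamma (n / 2 + 1 + 1 / 2) ≤ 2 * (√(n / 2 + 1 : ℝ) * Gamma (n / 2 + 1)) := by linarith
    _ ≤ √(n + 1) * √π * Gamma (n / 2 + 1) := by rw [← mul_assoc]; gcongr

theorem EuclideanSpace.volume_real_closedBall_fin (n : ℕ) (x : EuclideanSpace ℝ (Fin n))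
    {r : ℝ} (hr : 0 ≤ r) :
    volume.real (closedBall x r) = r ^ n * (√π ^ n / Gamma (n / 2 + 1)) := by
  rcases Nat.eq_zero_or_pos n with rfl | hn
  · have : closedBall x r = Set.univ := by
      ext y; simp [Subsingleton.elim y x, hr]
    simp [this, volume_euclideanSpace_eq_dirac]
  · have : Nonempty (Fin n) := ⟨⟨0, hn⟩⟩
    rw [measureReal_def, EuclideanSpace.volume_closedBall, Fintype.card_fin, ENNReal.toReal_mul,
      ENNReal.toReal_pow, ENNReal.toReal_ofReal hr, ENNReal.toReal_ofReal (by positivity)]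

theorem EuclideanSpace.two_mul_volume_real_closedBall_le (n : ℕ) {r : ℝ} (hr : 0 ≤ r) :
    2 * r * volume.real (closedBall (0 : EuclideanSpace ℝ (Fin n)) r) ≤
      √(n + 1) * volume.real (closedBall (0 : EuclideanSpace ℝ (Fin (n + 1))) r) := by
  rw [volume_real_closedBall_fin _ _ hr, volume_real_closedBall_fin _ _ hr]
  have hΓ := two_mul_Gamma_add_half_le n
  have hpos₁ := Gamma_pos_of_pos (by positivity : (0 : ℝ) < n / 2 + 1)
  have hpos₂ := Gamma_pos_of_pos (by positivity : (0 : ℝ) < (n + 1 : ℕ) / 2 + 1)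
  rw [mul_div_assoc', mul_div_assoc', mul_div_assoc', mul_div_assoc',
    div_le_div_iff₀ hpos₁ hpos₂]
  calc 2 * r * (r ^ n * √π ^ n) * Gamma ((n + 1 : ℕ) / 2 + 1)
      = r ^ (n + 1) * √π ^ n * (2 * Gamma ((n + 1 : ℕ) / 2 + 1)) := by ring
    _ ≤ r ^ (n + 1) * √π ^ n * (√(n + 1) * √π * Gamma (n / 2 + 1)) := by gcongr
    _ = √(n + 1) * (r ^ (n + 1) * √π ^ (n + 1)) * Gamma (n / 2 + 1) := by ring

theorem Real.volume_setOf_sq_le_lt_sub_sq_le (a : ℝ) {δ : ℝ} (hδ : 0 ≤ δ) :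
    volume {t : ℝ | t ^ 2 ≤ a ∧ a < (t - δ) ^ 2} ≤ ENNReal.ofReal δ := by
  have hsub : {t : ℝ | t ^ 2 ≤ a ∧ a < (t - δ) ^ 2} ⊆ Set.Ico (-√a) (δ - √a) := by
    rintro t ⟨ht, htδ⟩
    have hta := abs_le.1 (abs_le_sqrt ht)
    refine ⟨hta.1, not_le.1 fun h => htδ.not_ge ?_⟩
    rw [← sq_sqrt ((sq_nonneg t).trans ht)]
    exact sq_le_sq' (by linarith) (by linarith)
  calc volume _ ≤ volume (Set.Ico (-√a) (δ - √a)) := measure_mono hsub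
    _ = ENNReal.ofReal δ := by rw [Real.volume_Ico, sub_neg_eq_add, sub_add_cancel]

theorem volume_prod_setOf_sq_le_lt_sub_sq_le {F : Type*} [MeasurableSpace F] (ν : Measure F)
    [SFinite ν] {a : F → ℝ} (ha : Measurable a) {δ : ℝ} (hδ : 0 ≤ δ) :
    (volume.prod ν) {p : ℝ × F | p.1 ^ 2 ≤ a p.2 ∧ a p.2 < (p.1 - δ) ^ 2} ≤
      ENNReal.ofReal δ * ν {y | 0 ≤ a y} := by
  have hmeas : MeasurableSet {p : ℝ × F | p.1 ^ 2 ≤ a p.2 ∧ a p.2 < (p.1 - δ) ^ 2} :=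
    (measurableSet_le (by fun_prop) (ha.comp measurable_snd)).inter
      (measurableSet_lt (ha.comp measurable_snd) (by fun_prop))
  have hslice (y : F) : volume {t : ℝ | t ^ 2 ≤ a y ∧ a y < (t - δ) ^ 2} ≤
      {y | 0 ≤ a y}.indicator (fun _ => ENNReal.ofReal δ) y := by
    by_cases hy : y ∈ {y | 0 ≤ a y}
    · rw [Set.indicator_of_mem hy]
      exact Real.volume_setOf_sq_le_lt_sub_sq_le _ hδ
    · have hempty : {t : ℝ | t ^ 2 ≤ a y ∧ a y < (t - δ) ^ 2} = ∅ :=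
        Set.eq_empty_of_forall_notMem fun t ht => hy ((sq_nonneg t).trans ht.1)
      rw [Set.indicator_of_notMem hy, hempty, measure_empty]
  rw [Measure.prod_apply_symm hmeas, ← setLIntegral_const,
    ← lintegral_indicator (measurableSet_le measurable_const ha)]
  exact lintegral_mono hslice

theorem EuclideanSpace.volume_closedBall_diff_closedBall_single_le (n : ℕ) {r δ : ℝ}
    (hr : 0 ≤ r) (hδ : 0 ≤ δ) :
    volume (closedBall (0 : EuclideanSpace ℝ (Fin (n + 1))) r \
        closedBall (EuclideanSpace.single 0 δ) r) ≤
      ENNReal.ofReal δ * volume (closedBall (0 : EuclideanSpace ℝ (Fin n)) r) := by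
  set a : (Fin n → ℝ) → ℝ := fun y => r ^ 2 - ∑ i, y i ^ 2
  set Θ : EuclideanSpace ℝ (Fin (n + 1)) → ℝ × (Fin n → ℝ) :=
    fun x => MeasurableEquiv.piFinSuccAbove (fun _ => ℝ) 0 x.ofLp
  have hΘ : MeasurePreserving Θ volume (volume.prod volume) :=
    (volume_preserving_piFinSuccAbove (fun _ => ℝ) 0).comp (PiLp.volume_preserving_ofLp _)
  have hpre : Θ ⁻¹' {p | p.1 ^ 2 ≤ a p.2 ∧ a p.2 < (p.1 - δ) ^ 2} =
      closedBall 0 r \ closedBall (EuclideanSpace.single 0 δ) r := by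
    ext x
    have hmem (c : EuclideanSpace ℝ (Fin (n + 1))) :
        x ∈ closedBall c r ↔ ∑ i, (x i - c i) ^ 2 ≤ r ^ 2 := by
      rw [mem_closedBall_iff_norm, ← mem_closedBall_zero_iff, closedBall_zero_eq _ hr]; rfl
    rw [Set.mem_sdiff, hmem, hmem, Fin.sum_univ_succ, Fin.sum_univ_succ]
    simp only [Θ, MeasurableEquiv.piFinSuccAbove_apply, Fin.insertNthEquiv_zero,
      Fin.consEquiv_symm_apply, Set.preimage_ofPred_eq, Fin.tail, Set.mem_ofPred_eq,
      PiLp.zero_apply, sub_zero, PiLp.single_eq_same, ne_eq, Fin.succ_ne_zero, not_false_eq_true,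
      PiLp.single_eq_of_ne, not_le, a]
    constructor <;> rintro ⟨h₁, h₂⟩ <;> constructor <;> linarith
  have hball : volume {y | 0 ≤ a y} = volume (closedBall (0 : EuclideanSpace ℝ (Fin n)) r) := by
    rw [← (PiLp.volume_preserving_toLp (Fin n)).measure_preimage
      measurableSet_closedBall.nullMeasurableSet, closedBall_zero_eq _ hr]
    simp [a]
  calc volume (closedBall 0 r \ closedBall (EuclideanSpace.single (0 : Fin (n + 1)) δ) r)
      ≤ (volume.prod volume) {p | p.1 ^ 2 ≤ a p.2 ∧ a p.2 < (p.1 - δ) ^ 2} := by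
        rw [← hpre, ← hΘ.map_eq]; exact Measure.le_map_apply hΘ.measurable.aemeasurable _
    _ ≤ ENNReal.ofReal δ * volume (closedBall (0 : EuclideanSpace ℝ (Fin n)) r) := by
        rw [← hball]; exact volume_prod_setOf_sq_le_lt_sub_sq_le _ (by fun_prop) hδ

theorem volume_closedBall_diff_closedBall_eq_of_dist_eq {E : Type*} [NormedAddCommGroup E]
    [InnerProductSpace ℝ E] [FiniteDimensional ℝ E] [MeasurableSpace E] [BorelSpace E]
    {x y x' y' : E} (h : dist x y = dist x' y') (r : ℝ) :
    volume (closedBall x r \ closedBall y r) = volume (closedBall x' r \ closedBall y' r) := by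
  rw [dist_comm, dist_eq_norm, dist_comm, dist_eq_norm] at h
  set T := (ℝ ∙ ((y - x) - (y' - x')))ᗮ.reflection
  have hT : T (y - x) = y' - x' := Submodule.reflection_sub h
  have hφ : MeasurePreserving (fun z => T (z - x) + x') volume volume :=
    (measurePreserving_add_right volume x').comp
      (T.measurePreserving.comp (measurePreserving_sub_right volume x))
  have hpre : (fun z => T (z - x) + x') ⁻¹' (closedBall x' r \ closedBall y' r) =
      closedBall x r \ closedBall y r := by
    ext z
    have hy' : T (z - x) + x' - y' = T (z - y) := by
      rw [show z - y = (z - x) - (y - x) by abel, map_sub (f := T) (z - x), hT]; abel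
    simp only [Set.mem_preimage, Set.mem_sdiff, mem_closedBall_iff_norm, add_sub_cancel_right,
      hy', LinearIsometryEquiv.norm_map]
  rw [← hpre, hφ.measure_preimage
    (measurableSet_closedBall.diff measurableSet_closedBall).nullMeasurableSet]

theorem EuclideanSpace.volume_real_closedBall_diff_closedBall_le (n : ℕ) {r : ℝ} (hr : 0 ≤ r)
    (u v : EuclideanSpace ℝ (Fin (n + 1))) :
    volume.real (closedBall u r \ closedBall v r) ≤
      dist u v * volume.real (closedBall (0 : EuclideanSpace ℝ (Fin n)) r) := by
  have hdist : dist u v = dist 0 (EuclideanSpace.single (0 : Fin (n + 1)) (dist u v)) := by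
    rw [dist_zero_left, PiLp.norm_single, Real.norm_of_nonneg dist_nonneg]
  have h := volume_closedBall_diff_closedBall_single_le n hr (dist_nonneg (x := u) (y := v))
  rw [← volume_closedBall_diff_closedBall_eq_of_dist_eq hdist] at h
  rw [measureReal_def, measureReal_def, ← ENNReal.toReal_ofReal dist_nonneg, ← ENNReal.toReal_mul]
  exact ENNReal.toReal_mono
    (ENNReal.mul_ne_top ENNReal.ofReal_ne_top measure_closedBall_lt_top.ne) h

theorem norm_setIntegral_sub_setIntegral_le {α V : Type*} [MeasurableSpace α]
    [NormedAddCommGroup V] [NormedSpace ℝ V] {μ : Measure α} {s t : Set α}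
    (hs : MeasurableSet s) (ht : MeasurableSet t) (hμs : μ s ≠ ⊤) (hμt : μ t ≠ ⊤) {F : α → V}
    (hF : AEStronglyMeasurable F μ) {C : ℝ} (hC : ∀ x, ‖F x‖ ≤ C) :
    ‖∫ x in s, F x ∂μ - ∫ x in t, F x ∂μ‖ ≤ C * (μ.real (s \ t) + μ.real (t \ s)) := by
  have hint {u : Set α} (hu : μ u ≠ ⊤) : IntegrableOn F u μ :=
    IntegrableOn.of_bound hu.lt_top hF.restrict C (ae_of_all _ hC)
  have hbound {u w : Set α} (hu : μ u ≠ ⊤) : ‖∫ x in u \ w, F x ∂μ‖ ≤ C * μ.real (u \ w) :=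
    norm_setIntegral_le_of_norm_le_const ((measure_mono Set.sdiff_subset).trans_lt hu.lt_top)
      fun x _ => hC x
  rw [← integral_inter_add_sdiff ht (hint hμs), ← integral_inter_add_sdiff hs (hint hμt),
    Set.inter_comm, add_sub_add_left_eq_sub, mul_add]
  exact (norm_sub_le _ _).trans (add_le_add (hbound hμs) (hbound hμt))

section UniformBall

variable {d : ℕ} {r : ℝ}

theorem uniformBall_absolutelyContinuous : uniformBall d r ≪ volume :=
  Measure.smul_absolutelyContinuous.trans
    (Measure.absolutelyContinuous_of_le Measure.restrict_le_self)

theorem integrable_uniformBall {V : Type*} [NormedAddCommGroup V] (hr : 0 < r)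
    {F : EuclideanSpace ℝ (Fin d) → V} (hF : IntegrableOn F (closedBall 0 r)) :
    Integrable F (uniformBall d r) :=
  hF.smul_measure (ENNReal.inv_ne_top.2 (measure_closedBall_pos volume 0 hr).ne')

theorem integral_uniformBall_comp_add {V : Type*} [NormedAddCommGroup V] [NormedSpace ℝ V]
    (F : EuclideanSpace ℝ (Fin d) → V) (θ : EuclideanSpace ℝ (Fin d)) :
    ∫ y, F (θ + y) ∂uniformBall d r =
      (volume.real (closedBall (0 : EuclideanSpace ℝ (Fin d)) r))⁻¹ •
        ∫ z in closedBall θ r, F z := by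
  rw [uniformBall, integral_smul_measure, ENNReal.toReal_inv, ← measureReal_def]
  congr 1
  have h := (measurePreserving_add_left volume θ).setIntegral_preimage_emb
    (measurableEmbedding_addLeft θ) F (closedBall θ r)
  rwa [preimage_add_left_closedBall, neg_add_cancel] at h

theorem norm_integral_uniformBall_comp_add_sub_le {V : Type*} [NormedAddCommGroup V]
    [NormedSpace ℝ V] {F : EuclideanSpace ℝ (Fin d) → V} (hF : AEStronglyMeasurable F volume)
    {C : ℝ} (hC : ∀ x, ‖F x‖ ≤ C) (hr : 0 < r) (u v : EuclideanSpace ℝ (Fin d)) :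
    ‖∫ y, F (u + y) ∂uniformBall d r - ∫ y, F (v + y) ∂uniformBall d r‖ ≤
      C * √d / r * ‖u - v‖ := by
  obtain _ | n := d
  · rw [Subsingleton.elim u v, sub_self, sub_self, norm_zero, norm_zero, mul_zero]
  set V := volume.real (closedBall (0 : EuclideanSpace ℝ (Fin (n + 1))) r)
  set W := volume.real (closedBall (0 : EuclideanSpace ℝ (Fin n)) r)
  have hV : 0 < V :=
    ENNReal.toReal_pos (measure_closedBall_pos volume 0 hr).ne' measure_closedBall_lt_top.ne
  have hC₀ : 0 ≤ C := (norm_nonneg _).trans (hC 0)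
  have hlens : ‖(∫ z in closedBall u r, F z) - ∫ z in closedBall v r, F z‖ ≤
      C * (2 * ‖u - v‖ * W) := by
    refine (norm_setIntegral_sub_setIntegral_le measurableSet_closedBall measurableSet_closedBall
      measure_closedBall_lt_top.ne measure_closedBall_lt_top.ne hF hC).trans ?_
    have huv := EuclideanSpace.volume_real_closedBall_diff_closedBall_le n hr.le u v
    have hvu := EuclideanSpace.volume_real_closedBall_diff_closedBall_le n hr.le v u
    rw [dist_eq_norm] at huv
    rw [dist_comm, dist_eq_norm] at hvu
    gcongr
    linarith
  have hvol : 2 * r * W ≤ √(n + 1) * V :=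
    EuclideanSpace.two_mul_volume_real_closedBall_le n hr.le
  rw [integral_uniformBall_comp_add, integral_uniformBall_comp_add, ← smul_sub, norm_smul,
    norm_inv, Real.norm_of_nonneg hV.le]
  calc V⁻¹ * ‖(∫ z in closedBall u r, F z) - ∫ z in closedBall v r, F z‖
      ≤ V⁻¹ * (C * (2 * ‖u - v‖ * W)) := by gcongr
    _ = C * ‖u - v‖ / r * (2 * r * W) / V := by field_simp
    _ ≤ C * ‖u - v‖ / r * (√(n + 1) * V) / V := by gcongr
    _ = C * √(n + 1 : ℕ) / r * ‖u - v‖ := by push_cast; field_simp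

end UniformBall

theorem ConvexOn.fderiv_apply_sub_le {E : Type*} [NormedAddCommGroup E] [NormedSpace ℝ E]
    {f : E → ℝ} (hf : ConvexOn ℝ Set.univ f) {a : E} (ha : DifferentiableAt ℝ f a) (b : E) :
    fderiv ℝ f a (b - a) ≤ f b - f a := by
  have hconv : ConvexOn ℝ Set.univ (f ∘ AffineMap.lineMap (k := ℝ) a b) := by
    simpa using hf.comp_affineMap (AffineMap.lineMap (k := ℝ) a b)
  have hderiv : HasDerivAt (f ∘ AffineMap.lineMap (k := ℝ) a b) (fderiv ℝ f a (b - a)) 0 := by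
    refine HasFDerivAt.comp_hasDerivAt (0 : ℝ) ?_ AffineMap.hasDerivAt_lineMap
    rw [AffineMap.lineMap_apply_zero]
    exact ha.hasFDerivAt
  simpa [slope_def_field] using
    hconv.le_slope_of_hasDerivAt (Set.mem_univ 0) (Set.mem_univ 1) zero_lt_one hderiv

theorem hasGradientAt_of_inner_le_sub_le {E : Type*} [NormedAddCommGroup E]
    [InnerProductSpace ℝ E] [CompleteSpace E] {f : E → ℝ} {g : E → E} {x : E}
    (hg : ContinuousAt g x) (hlow : ∀ h, ⟪g x, h⟫ ≤ f (x + h) - f x)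
    (hup : ∀ h, f (x + h) - f x ≤ ⟪g (x + h), h⟫) : HasGradientAt f (g x) x := by
  rw [hasGradientAt_iff_hasFDerivAt, hasFDerivAt_iff_isLittleO_nhds_zero]
  refine Asymptotics.isLittleO_iff.2 fun ε hε => ?_
  have hcont : Tendsto (fun h => g (x + h)) (𝓝 0) (𝓝 (g x)) :=
    hg.tendsto.comp ((continuous_const_add x).tendsto' 0 x (add_zero x))
  filter_upwards [hcont.eventually (closedBall_mem_nhds (g x) hε)] with h hh
  rw [dist_eq_norm] at hh
  rw [InnerProductSpace.toDual_apply_apply, Real.norm_of_nonneg (sub_nonneg.2 (hlow h))]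
  calc f (x + h) - f x - ⟪g x, h⟫ ≤ ⟪g (x + h) - g x, h⟫ := by
        rw [inner_sub_left]; linarith [hup h]
    _ ≤ ‖g (x + h) - g x‖ * ‖h‖ := real_inner_le_norm _ _
    _ ≤ ε * ‖h‖ := by gcongr

section Gradient

variable {E : Type*} [NormedAddCommGroup E] [InnerProductSpace ℝ E] [CompleteSpace E]

theorem measurable_gradient [MeasurableSpace E] [BorelSpace E] (f : E → ℝ) :
    Measurable (gradient f) :=
  (InnerProductSpace.toDual ℝ E).symm.continuous.measurable.comp (measurable_fderiv ℝ f)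

theorem LipschitzWith.norm_gradient_le {f : E → ℝ} {K : NNReal} (hf : LipschitzWith K f)
    (x : E) : ‖gradient f x‖ ≤ K := by
  rw [gradient, LinearIsometryEquiv.norm_map]
  exact norm_fderiv_le_of_lipschitz ℝ hf

end Gradient

theorem inner_integral_gradient_le_smoothed_sub {d : ℕ} {ℓ : EuclideanSpace ℝ (Fin d) → ℝ}
    {K : NNReal} (hconv : ConvexOn ℝ Set.univ ℓ) (hℓ : LipschitzWith K ℓ) {r : ℝ} (hr : 0 < r)
    (θ h : EuclideanSpace ℝ (Fin d)) :
    ⟪∫ y, gradient ℓ (θ + y) ∂uniformBall d r, h⟫ ≤ smoothed ℓ r (θ + h) - smoothed ℓ r θ := by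
  have hint (a : EuclideanSpace ℝ (Fin d)) : Integrable (fun y => ℓ (a + y)) (uniformBall d r) :=
    integrable_uniformBall hr
      ((hℓ.continuous.comp (continuous_const_add a)).continuousOn.integrableOn_compact
        (isCompact_closedBall 0 r))
  have hgrad : Integrable (fun y => gradient ℓ (θ + y)) (uniformBall d r) :=
    integrable_uniformBall hr (IntegrableOn.of_bound measure_closedBall_lt_top
      ((measurable_gradient ℓ).comp (measurable_const_add θ)).aestronglyMeasurable K
      (ae_of_all _ fun y => hℓ.norm_gradient_le _))
  have hdiff : ∀ᵐ y ∂uniformBall d r, DifferentiableAt ℝ ℓ (θ + y) :=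
    uniformBall_absolutelyContinuous.ae_le
      ((measurePreserving_add_left volume θ).quasiMeasurePreserving.ae hℓ.ae_differentiableAt)
  calc ⟪∫ y, gradient ℓ (θ + y) ∂uniformBall d r, h⟫
      = ∫ y, ⟪gradient ℓ (θ + y), h⟫ ∂uniformBall d r := by
        rw [real_inner_comm, ← integral_inner hgrad]; simp_rw [real_inner_comm]
    _ ≤ ∫ y, (ℓ (θ + h + y) - ℓ (θ + y)) ∂uniformBall d r := by
        refine integral_mono_ae (hgrad.inner_const h) ((hint _).sub (hint _)) ?_
        filter_upwards [hdiff] with y hy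
        have := hconv.fderiv_apply_sub_le hy (θ + h + y)
        rwa [show θ + h + y - (θ + y) = h by abel, ← InnerProductSpace.toDual_symm_apply] at this
    _ = smoothed ℓ r (θ + h) - smoothed ℓ r θ := integral_sub (hint _) (hint _)

theorem stmt9 {d : ℕ} (ℓ : EuclideanSpace ℝ (Fin d) → ℝ) (G : ℝ) (hG : 0 ≤ G)
    (hconv : ConvexOn ℝ Set.univ ℓ)
    (hlip : ∀ u v, |ℓ u - ℓ v| ≤ G * ‖u - v‖)
    (r : ℝ) (hr : 0 < r) :
    Differentiable ℝ (smoothed ℓ r) ∧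
    ∀ u v, ‖gradient (smoothed ℓ r) u - gradient (smoothed ℓ r) v‖ ≤
      G * Real.sqrt d / r * ‖u - v‖ := by
  have hℓ : LipschitzWith G.toNNReal ℓ := LipschitzWith.of_dist_le' fun u v => by
    simpa only [dist_eq_norm, Real.norm_eq_abs] using hlip u v
  set g := fun θ => ∫ y, gradient ℓ (θ + y) ∂uniformBall d r
  have hg (u v) : ‖g u - g v‖ ≤ G * √d / r * ‖u - v‖ :=
    norm_integral_uniformBall_comp_add_sub_le (measurable_gradient ℓ).aestronglyMeasurable
      (fun x => (hℓ.norm_gradient_le x).trans_eq (Real.coe_toNNReal G hG)) hr u v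
  have hg_cont : Continuous g :=
    (LipschitzWith.of_dist_le' fun u v => by simpa only [dist_eq_norm] using hg u v).continuous
  have hgrad (θ) : HasGradientAt (smoothed ℓ r) (g θ) θ := by
    refine hasGradientAt_of_inner_le_sub_le hg_cont.continuousAt
      (inner_integral_gradient_le_smoothed_sub hconv hℓ hr θ) fun h => ?_
    have := inner_integral_gradient_le_smoothed_sub hconv hℓ hr (θ + h) (-h)
    rw [inner_neg_right, add_neg_cancel_right] at this
    linarith
  refine ⟨fun θ => (hgrad θ).differentiableAt, fun u v => ?_⟩
  rw [(hgrad u).gradient, (hgrad v).gradient]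
  exact hg u v
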